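/- The representation S = (k, 0)_{z∈θ} of a poset with involution (P,θ), with S₀ = k one-dimensional and S_z = 0 for all z ∈ θ, is ε-projective: for every proper epimorphism g: E → V and every morphism f: S → V there exists h: S → E with g∘h = f. -/

import Mathlib

open scoped Classical

/-! ## Posets with involution and their vector-space representations -/

structure PosetInv (P : Type) [PartialOrder P] where
  σ : P → P
  invol : ∀ x, σ (σ x) = x

namespace PosetInv

variable {P : Type} [PartialOrder P]

/-- The equivalence relation whose classes are `{x, σ x}`. -/
def r (I : PosetInv P) (x y : P) : Prop := y = x ∨ y = I.σ x

theorem r_refl (I : PosetInv P) (x : P) : I.r x x := Or.inl rfl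

theorem r_symm (I : PosetInv P) {x y : P} (h : I.r x y) : I.r y x := by
  rcases h with rfl | rfl
  · exact Or.inl rfl
  · exact Or.inr (I.invol x).symm

theorem r_trans (I : PosetInv P) {x y z : P} (h1 : I.r x y) (h2 : I.r y z) : I.r x z := by
  rcases h1 with rfl | rfl
  · exact h2
  · rcases h2 with rfl | rfl
    · exact Or.inr rfl
    · rw [I.invol]; exact Or.inl rfl

def setoid (I : PosetInv P) : Setoid P := ⟨I.r, ⟨I.r_refl, I.r_symm, I.r_trans⟩⟩

/-- The set `θ` of equivalence classes. -/
def Classes (I : PosetInv P) : Type := Quotient I.setoid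

/-- The class `[x]` of an element. -/
def cls (I : PosetInv P) (x : P) : I.Classes := Quotient.mk I.setoid x

/-- The underlying set of elements of a class. -/
def carrier (I : PosetInv P) : I.Classes → Set P :=
  Quotient.lift (fun x => {y | I.r x y}) (by
    intro a b hab
    ext y
    constructor
    · intro h; exact I.r_trans (I.r_symm hab) h
    · intro h; exact I.r_trans hab h)

theorem mem_cls (I : PosetInv P) (x : P) : x ∈ I.carrier (I.cls x) := I.r_refl x

theorem sigma_mem_cls (I : PosetInv P) (x : P) : I.σ x ∈ I.carrier (I.cls x) := Or.inr rfl

end PosetInv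

open PosetInv

/-- A vector-space representation `V = (V₀, V_z)_{z ∈ θ}` of the poset with involution
`(P, θ)`:  a finite-dimensional space `V₀` together with, for each class `z`, a subspace
`V_z ⊆ V₀^z` (functions on the class), satisfying `V_y⁺ ⊆ V_x⁻` for `y < x`. -/
structure RepI (k : Type) [Field k] {P : Type} [PartialOrder P] (I : PosetInv P) where
  V0 : Type
  [acg : AddCommGroup V0]
  [mod : Module k V0]
  [fd : FiniteDimensional k V0]
  Vz : ∀ z : I.Classes, Submodule k (↥(I.carrier z) → V0)
  compat : ∀ ⦃x y : P⦄, y < x → ∀ h ∈ Vz (I.cls y),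
    (fun w : ↥(I.carrier (I.cls x)) => if (w : P) = x then h ⟨y, I.mem_cls y⟩ else 0)
      ∈ Vz (I.cls x)

attribute [instance] RepI.acg RepI.mod RepI.fd

variable {k : Type} [Field k] {P : Type} [PartialOrder P] {I : PosetInv P}

/-- A morphism of representations:  a linear map `φ : V₀ → W₀` with `φ^z(V_z) ⊆ W_z`. -/
@[ext]
structure Hom (V W : RepI k I) where
  φ : V.V0 →ₗ[k] W.V0
  maps : ∀ z, ∀ h ∈ V.Vz z, (fun w => φ (h w)) ∈ W.Vz z

namespace Hom

def comp {U V W : RepI k I} (g : Hom V W) (f : Hom U V) : Hom U W :=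
  ⟨g.φ ∘ₗ f.φ, fun z h hh => g.maps z _ (f.maps z h hh)⟩

def idH (V : RepI k I) : Hom V V := ⟨LinearMap.id, fun _ _ hh => hh⟩

def zeroH (V W : RepI k I) : Hom V W :=
  ⟨0, fun z _ _ => (W.Vz z).zero_mem⟩

end Hom

/-- `f` is a proper epimorphism:  surjective on `V₀` and on each `V_z`. -/
def ProperEpi {V W : RepI k I} (f : Hom V W) : Prop :=
  Function.Surjective f.φ ∧
    ∀ z, ∀ g ∈ W.Vz z, ∃ h ∈ V.Vz z, (fun w => f.φ (h w)) = g

/-- `f` is a proper monomorphism:  injective on `U₀`, and the elements of `V_z` all of whose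
coordinates lie in the image of `f` are exactly the images of elements of `U_z`. -/
def ProperMono {U V : RepI k I} (f : Hom U V) : Prop :=
  Function.Injective f.φ ∧
    ∀ z, ∀ h ∈ V.Vz z, (∀ w, h w ∈ LinearMap.range f.φ) →
      ∃ g ∈ U.Vz z, (fun w => f.φ (g w)) = h

/-- `(u, v)` is an `ε`-sequence:  `0 → U₀ → V₀ → W₀ → 0` and each
`0 → U_z → V_z → W_z → 0` is exact. -/
def IsEpsSeq {U V W : RepI k I} (u : Hom U V) (v : Hom V W) : Prop :=
  Function.Injective u.φ ∧ Function.Surjective v.φ ∧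
    LinearMap.range u.φ = LinearMap.ker v.φ ∧
    ∀ z, (∀ h ∈ W.Vz z, ∃ g ∈ V.Vz z, (fun w => v.φ (g w)) = h) ∧
      (∀ g ∈ V.Vz z, (fun w => v.φ (g w)) = 0 →
        ∃ p ∈ U.Vz z, (fun w => u.φ (p w)) = g)

variable (k : Type) [Field k] {P : Type} [PartialOrder P] (I : PosetInv P)

/-- The trivial representation `S = (k, 0)`. -/
def SRep : RepI k I where
  V0 := k
  Vz := fun _ => ⊥
  compat := by
    intro x y _ h hh
    rw [Submodule.mem_bot] at hh ⊢
    subst hh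
    funext w
    simp

/-! Since `S_z = 0`, a morphism `S → E` is the same as a vector of `E₀`, the image of `1`;
so `f` lifts along `g` as soon as `f(1)` has a preimage under `g₀`. -/

namespace Hom

variable {k I}

def ofSRep {E : RepI k I} (e : E.V0) : Hom (SRep k I) E where
  φ := LinearMap.toSpanSingleton k E.V0 e
  maps z h hh := by
    obtain rfl : h = 0 := (Submodule.mem_bot k).mp hh
    convert (E.Vz z).zero_mem
    exact (LinearMap.toSpanSingleton k E.V0 e).map_zero

theorem ofSRep_φ_one {E : RepI k I} (e : E.V0) : (ofSRep e).φ (1 : k) = e :=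
  one_smul k e

theorem ofSRep_φ_one_eq_self {V : RepI k I} (f : Hom (SRep k I) V) : ofSRep (f.φ (1 : k)) = f :=
  Hom.ext (LinearMap.ext_ring (ofSRep_φ_one _))

theorem comp_ofSRep {E V : RepI k I} (g : Hom E V) (e : E.V0) :
    g.comp (ofSRep e) = ofSRep (g.φ e) :=
  Hom.ext (LinearMap.ext_ring ((congrArg g.φ (ofSRep_φ_one e)).trans (ofSRep_φ_one _).symm))

theorem exists_SRep_lift_of_surjective {E V : RepI k I} (g : Hom E V)
    (hg : Function.Surjective g.φ) (f : Hom (SRep k I) V) :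
    ∃ h : Hom (SRep k I) E, g.comp h = f := by
  obtain ⟨e, he⟩ := hg (f.φ (1 : k))
  exact ⟨ofSRep e, by rw [comp_ofSRep, he, ofSRep_φ_one_eq_self]⟩

end Hom

theorem SRep_projective (k : Type) [Field k] {P : Type} [PartialOrder P] (I : PosetInv P) :
    ∀ (E V : RepI k I) (g : Hom E V), ProperEpi g →
      ∀ f : Hom (SRep k I) V, ∃ h : Hom (SRep k I) E, Hom.comp g h = f :=
  fun _ _ g hg f => Hom.exists_SRep_lift_of_surjective g hg.1 f
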